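/- For the Drach (k)-potential Hamiltonian H₁ = p_x p_y + αy^{-1/2} + βxy^{-1/2} + γx on y > 0, the cubic function K₃ = 6(-y)(∂H₁/∂x · p_y - p_x · ∂H₁/∂y) - 3p_x²p_y satisfies {H₁, K₃} = 0. -/

import Mathlib

/-! On `y > 0` the cubic integral simplifies to
`K₃ = -6β√y p_y - 6γ y p_y - 3p_x(α + βx)/√y - 3p_x²p_y`, whose partial derivatives are
elementary; substituting them and those of `H₁` into the bracket leaves a rational expression in
`√y` that vanishes identically once `√y² = y`. -/

noncomputable def pb (F G : ℝ → ℝ → ℝ → ℝ → ℝ) (x y px py : ℝ) : ℝ :=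
  deriv (fun t => F x y t py) px * deriv (fun t => G t y px py) x
  - deriv (fun t => F t y px py) x * deriv (fun t => G x y t py) px
  + deriv (fun t => F x y px t) py * deriv (fun t => G x t px py) y
  - deriv (fun t => F x t px py) y * deriv (fun t => G x y px t) py

noncomputable def H₁k (α β γ : ℝ) : ℝ → ℝ → ℝ → ℝ → ℝ :=
  fun x y px py => px*py + α / Real.sqrt y + β*x / Real.sqrt y + γ*x

noncomputable def K₃k (α β γ : ℝ) : ℝ → ℝ → ℝ → ℝ → ℝ :=
  fun x y px py =>
    6*(-y) * ((β / Real.sqrt y + γ) * py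
      - px * (-(α + β*x) / (2 * y * Real.sqrt y)))
    - 3*px^2*py

open Real

theorem pb_eq_of_hasDerivAt {F G : ℝ → ℝ → ℝ → ℝ → ℝ} {x y px py : ℝ}
    {Fx Fy Fpx Fpy Gx Gy Gpx Gpy : ℝ}
    (hFx : HasDerivAt (fun t => F t y px py) Fx x) (hFy : HasDerivAt (fun t => F x t px py) Fy y)
    (hFpx : HasDerivAt (fun t => F x y t py) Fpx px)
    (hFpy : HasDerivAt (fun t => F x y px t) Fpy py)
    (hGx : HasDerivAt (fun t => G t y px py) Gx x) (hGy : HasDerivAt (fun t => G x t px py) Gy y)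
    (hGpx : HasDerivAt (fun t => G x y t py) Gpx px)
    (hGpy : HasDerivAt (fun t => G x y px t) Gpy py) :
    pb F G x y px py = Fpx * Gx - Fx * Gpx + Fpy * Gy - Fy * Gpy := by
  rw [pb, hFx.deriv, hFy.deriv, hFpx.deriv, hFpy.deriv, hGx.deriv, hGy.deriv, hGpx.deriv,
    hGpy.deriv]

theorem hasDerivAt_inv_sqrt {y : ℝ} (hy : 0 < y) :
    HasDerivAt (fun t => (√t)⁻¹) (-(2 * y * √y)⁻¹) y := by
  have hs := sqrt_pos.2 hy
  refine ((hasDerivAt_sqrt hy.ne').inv hs.ne').congr_deriv ?_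
  rw [sq_sqrt hy.le]
  field_simp

section DrachK

variable (α β γ x px py : ℝ) {y : ℝ}

theorem hasDerivAt_H₁k_x : HasDerivAt (fun t => H₁k α β γ t y px py) (β / √y + γ) x := by
  refine ((((hasDerivAt_id' x).const_mul β).div_const (√y)).const_add (px * py + α / √y)).add
    ((hasDerivAt_id' x).const_mul γ) |>.congr_deriv ?_
  ring

theorem hasDerivAt_H₁k_px : HasDerivAt (fun t => H₁k α β γ x y t py) py px := by
  refine ((((hasDerivAt_id' px).mul_const py).add_const (α / √y)).add_const (β * x / √y)).add_const
    (γ * x) |>.congr_deriv ?_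
  ring

theorem hasDerivAt_H₁k_py : HasDerivAt (fun t => H₁k α β γ x y px t) px py := by
  refine ((((hasDerivAt_id' py).const_mul px).add_const (α / √y)).add_const (β * x / √y)).add_const
    (γ * x) |>.congr_deriv ?_
  ring

theorem hasDerivAt_H₁k_y (hy : 0 < y) :
    HasDerivAt (fun t => H₁k α β γ x t px py) (-(α + β * x) / (2 * y * √y)) y := by
  have h := (((hasDerivAt_inv_sqrt hy).const_mul (α + β * x)).const_add (px * py)).add_const (γ * x)
  refine (h.congr_of_eventuallyEq (Filter.Eventually.of_forall fun t => ?_)).congr_deriv ?_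
  · simp only [H₁k]; ring
  · ring

theorem K₃k_eq (hy : 0 < y) : K₃k α β γ x y px py =
    -6 * β * py * √y - 6 * γ * py * y - 3 * px * (α + β * x) * (√y)⁻¹ - 3 * px ^ 2 * py := by
  have hs := (sqrt_pos.2 hy).ne'
  have hsq := sq_sqrt hy.le
  simp only [K₃k]
  field_simp
  linear_combination 12 * β * py * hsq

theorem hasDerivAt_K₃k_x (hy : 0 < y) :
    HasDerivAt (fun t => K₃k α β γ t y px py) (-3 * β * px / √y) x := by
  simp only [K₃k_eq (hy := hy)]
  refine (((((hasDerivAt_id' x).const_mul β).const_add α).const_mul (3 * px)).mul_const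
    (√y)⁻¹ |>.const_sub (-6 * β * py * √y - 6 * γ * py * y) |>.sub_const (3 * px ^ 2 * py))
    |>.congr_deriv ?_
  ring

theorem hasDerivAt_K₃k_px (hy : 0 < y) :
    HasDerivAt (fun t => K₃k α β γ x y t py) (-3 * (α + β * x) / √y - 6 * px * py) px := by
  simp only [K₃k_eq (hy := hy)]
  refine ((((hasDerivAt_id' px).const_mul 3).mul_const (α + β * x)).mul_const (√y)⁻¹
    |>.const_sub (-6 * β * py * √y - 6 * γ * py * y)
    |>.sub (((hasDerivAt_pow 2 px).const_mul 3).mul_const py)) |>.congr_deriv ?_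
  simp only [Nat.cast_ofNat]
  ring

theorem hasDerivAt_K₃k_py (hy : 0 < y) :
    HasDerivAt (fun t => K₃k α β γ x y px t) (-6 * β * √y - 6 * γ * y - 3 * px ^ 2) py := by
  simp only [K₃k_eq (hy := hy)]
  refine (((((hasDerivAt_id' py).const_mul (-6 * β)).mul_const √y).sub
    (((hasDerivAt_id' py).const_mul (6 * γ)).mul_const y)).sub_const (3 * px * (α + β * x) * (√y)⁻¹)
    |>.sub ((hasDerivAt_id' py).const_mul (3 * px ^ 2))) |>.congr_deriv ?_
  ring

theorem hasDerivAt_K₃k_y (hy : 0 < y) :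
    HasDerivAt (fun t => K₃k α β γ x t px py)
      (-3 * β * py / √y - 6 * γ * py + 3 * px * (α + β * x) / (2 * y * √y)) y := by
  have h := (((hasDerivAt_sqrt hy.ne').const_mul (-6 * β * py)).sub
    ((hasDerivAt_id' y).const_mul (6 * γ * py))).sub
    ((hasDerivAt_inv_sqrt hy).const_mul (3 * px * (α + β * x))) |>.sub_const (3 * px ^ 2 * py)
  refine (h.congr_of_eventuallyEq ?_).congr_deriv ?_
  · filter_upwards [lt_mem_nhds hy] with t ht using K₃k_eq α β γ x px py ht
  · have hs := (sqrt_pos.2 hy).ne'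
    field_simp
    ring

end DrachK

theorem stmt14 (α β γ : ℝ) (x y px py : ℝ) (hy : 0 < y) :
    pb (H₁k α β γ) (K₃k α β γ) x y px py = 0 := by
  rw [pb_eq_of_hasDerivAt (hasDerivAt_H₁k_x α β γ x px py) (hasDerivAt_H₁k_y α β γ x px py hy)
    (hasDerivAt_H₁k_px α β γ x px py) (hasDerivAt_H₁k_py α β γ x px py)
    (hasDerivAt_K₃k_x α β γ x px py hy) (hasDerivAt_K₃k_y α β γ x px py hy)
    (hasDerivAt_K₃k_px α β γ x px py hy) (hasDerivAt_K₃k_py α β γ x px py hy)]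
  have hs := (sqrt_pos.2 hy).ne'
  field_simp
  linear_combination -6 * β * (α + β * x) * sq_sqrt hy.le
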